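/- arXiv:math/0601700 — 4 statements merged into one kernel-verified Lean document; each statement's English description precedes it below -/
import Mathlib

section
/- Let G be a residually finite group, d a left-invariant pseudometric on G, and K a finite subset of G such that the restriction of d to K is a metric (distinct points of K are at positive distance). Then there exist a subgroup H ⊆ G of finite index and a G-invariant pseudometric λ on the finite set G/H of left cosets such that the restriction of the quotient map G → G/H to K is distance-preserving from (K, d) to (G/H, λ). -/
/-- A group is residually finite: every nontrivial element survives in some
finite quotient, i.e. avoids some finite-index normal subgroup. -/
def IsResiduallyFinite (G : Type*) [Group G] : Prop :=
  ∀ g : G, g ≠ 1 → ∃ N : Subgroup G, N.Normal ∧ N.FiniteIndex ∧ g ∉ N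

/-- A left-invariant pseudometric on a group. -/
def IsLeftInvPseudometric {G : Type*} [Group G] (d : G → G → ℝ) : Prop :=
  (∀ x y, 0 ≤ d x y) ∧ (∀ x, d x x = 0) ∧ (∀ x y, d x y = d y x) ∧
    (∀ x y z, d x z ≤ d x y + d y z) ∧ (∀ g x y, d (g * x) (g * y) = d x y)


/-!
Put `‖g‖ = d 1 g`, a group seminorm with `d x y = ‖x⁻¹ * y‖`, and `T = {x⁻¹ * y | x ≠ y ∈ K}`.
The norms of elements of `T` are bounded below by some `ε > 0`, so `T`-words of weight at most
`M = ∑ t ∈ T, ‖t‖` have length at most `M / ε` and their products form a finite set. Residual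
finiteness provides a finite-index normal subgroup `N` such that `G → G ⧸ N` is injective on these
products together with `T`. On `G ⧸ N`, the least weight of a `T`-word representing a class,
capped at `M`, is a group seminorm. A word representing the class of `x⁻¹ * y` with weight below
the cap has product exactly `x⁻¹ * y`, so its weight is at least `d x y`; hence the induced
invariant pseudometric on `G ⧸ N` agrees with `d` on `K`.
-/

open scoped Pointwise

section

variable {G : Type*} [Group G]

theorem IsResiduallyFinite.exists_injOn_mk [DecidableEq G] (hG : IsResiduallyFinite G)
    (F : Finset G) :
    ∃ N : Subgroup G, N.Normal ∧ N.FiniteIndex ∧ Set.InjOn ((↑) : G → G ⧸ N) F := by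
  choose! N hN hNfin hgN using hG
  set D := ((F ×ˢ F).image fun x => x.1⁻¹ * x.2).erase 1
  have hD : ∀ g ∈ D, g ≠ 1 := fun g hg => Finset.ne_of_mem_erase hg
  refine ⟨⨅ g ∈ D, N g, Subgroup.normal_iInf_normal fun g =>
      Subgroup.normal_iInf_normal fun hg => hN g (hD g hg),
    Subgroup.finiteIndex_iInf' _ fun g hg => hNfin g (hD g hg), fun x hx y hy hxy => ?_⟩
  by_contra hne
  have hmem : x⁻¹ * y ∈ D := Finset.mem_erase.mpr
    ⟨by rwa [Ne, inv_mul_eq_one],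
      Finset.mem_image.mpr ⟨(x, y), Finset.mem_product.mpr ⟨hx, hy⟩, rfl⟩⟩
  exact hgN _ (hD _ hmem)
    (Subgroup.mem_iInf.mp (Subgroup.mem_iInf.mp (QuotientGroup.eq.mp hxy) _) hmem)

theorem GroupSeminorm.map_list_prod_le (p : GroupSeminorm G) :
    ∀ l : List G, p l.prod ≤ (l.map p).sum
  | [] => by simp
  | a :: l => by
    simpa using (map_mul_le_add p a l.prod).trans (add_le_add_right (p.map_list_prod_le l) _)

theorem Finset.list_prod_mem_pow [DecidableEq G] (s : Finset G) :
    ∀ l : List G, (∀ a ∈ l, a ∈ s) → l.prod ∈ s ^ l.length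
  | [] => fun _ => by simp
  | a :: l => fun h => by
    rw [List.prod_cons, List.length_cons, pow_succ']
    exact Finset.mul_mem_mul (h a (by simp)) (s.list_prod_mem_pow l fun b hb => h b (by simp [hb]))

theorem exists_finset_forall_prod_mem_of_sum_le [DecidableEq G] (T : Finset G) (w : G → ℝ)
    (hw : ∀ t ∈ T, 0 < w t) (M : ℝ) :
    ∃ F : Finset G, ∀ l : List G, (∀ t ∈ l, t ∈ T) → (l.map w).sum ≤ M → l.prod ∈ F := by
  obtain ⟨ε, hε, hεw⟩ : ∃ ε > 0, ∀ t ∈ T, ε ≤ w t := by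
    rcases T.eq_empty_or_nonempty with rfl | hT
    · exact ⟨1, one_pos, by simp⟩
    · exact ⟨T.inf' hT w, (T.lt_inf'_iff hT).mpr hw, fun t ht => T.inf'_le w ht⟩
  refine ⟨(Finset.range (⌊M / ε⌋₊ + 1)).biUnion (T ^ ·), fun l hl hlM => ?_⟩
  have hlen : l.length * ε ≤ M := by
    simpa using (List.card_nsmul_le_sum (l.map w) ε
      (by simpa using fun t ht => hεw t (hl t ht))).trans hlM
  refine Finset.mem_biUnion.mpr ⟨l.length, ?_, T.list_prod_mem_pow l hl⟩
  exact Finset.mem_range_succ_iff.mpr (Nat.le_floor ((le_div_iff₀ hε).mpr hlen))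

theorem Finset.inv_mem_image_offDiag_inv_mul [DecidableEq G] {K : Finset G} {t : G}
    (ht : t ∈ K.offDiag.image fun x => x.1⁻¹ * x.2) :
    t⁻¹ ∈ K.offDiag.image fun x => x.1⁻¹ * x.2 := by
  obtain ⟨⟨x, y⟩, hxy, rfl⟩ := Finset.mem_image.mp ht
  obtain ⟨hx, hy, hne⟩ := Finset.mem_offDiag.mp hxy
  exact Finset.mem_image.mpr ⟨(y, x), Finset.mem_offDiag.mpr ⟨hy, hx, hne.symm⟩, by simp⟩

def IsLeftInvPseudometric.toGroupSeminorm {d : G → G → ℝ} (hd : IsLeftInvPseudometric d) :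
    GroupSeminorm G where
  toFun := d 1
  map_one' := hd.2.1 1
  mul_le' x y := calc
    d 1 (x * y) ≤ d 1 x + d x (x * y) := hd.2.2.2.1 _ _ _
    _ = d 1 x + d 1 y := by rw [← hd.2.2.2.2 x 1 y, mul_one]
  inv' x := by
    simpa [hd.2.2.1 x] using (hd.2.2.2.2 x 1 x⁻¹).symm

theorem IsLeftInvPseudometric.toGroupSeminorm_inv_mul {d : G → G → ℝ}
    (hd : IsLeftInvPseudometric d) (x y : G) : hd.toGroupSeminorm (x⁻¹ * y) = d x y := by
  show d 1 (x⁻¹ * y) = d x y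
  simpa using (hd.2.2.2.2 x 1 (x⁻¹ * y)).symm

theorem GroupSeminorm.quotient_inv_mul_isInvariantPseudometric {N : Subgroup G} [N.Normal]
    (p : GroupSeminorm (G ⧸ N)) :
    (∀ x y : G ⧸ N, 0 ≤ p (x⁻¹ * y)) ∧ (∀ x : G ⧸ N, p (x⁻¹ * x) = 0) ∧
      (∀ x y : G ⧸ N, p (x⁻¹ * y) = p (y⁻¹ * x)) ∧
      (∀ x y z : G ⧸ N, p (x⁻¹ * z) ≤ p (x⁻¹ * y) + p (y⁻¹ * z)) ∧
      (∀ (g : G) (x y : G ⧸ N), p ((g • x)⁻¹ * (g • y)) = p (x⁻¹ * y)) := by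
  refine ⟨fun x y => apply_nonneg p _, fun x => by simp, fun x y => by
    rw [← map_inv_eq_map p, mul_inv_rev, inv_inv], fun x y z => ?_, fun g x y => ?_⟩
  · simpa [mul_assoc] using map_mul_le_add p (x⁻¹ * y) (y⁻¹ * z)
  · induction x using QuotientGroup.induction_on
    induction y using QuotientGroup.induction_on
    simp [← QuotientGroup.mk_inv, ← QuotientGroup.mk_mul, mul_assoc]

end

section CappedWordLength

variable {G Q : Type*} [Group G] [Group Q] (π : G →* Q) (p : GroupSeminorm G) (T : Set G)
  (M : ℝ)

def liftingWords (q : Q) : Set (List G) := {l | (∀ t ∈ l, t ∈ T) ∧ π l.prod = q}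

def cappedWordWeights (q : Q) : Set ℝ :=
  insert M ((fun l => (l.map p).sum) '' liftingWords π T q)

noncomputable def cappedWordLength (q : Q) : ℝ := sInf (cappedWordWeights π p T M q)

variable {π p T M}

theorem nonneg_of_mem_cappedWordWeights (hM : 0 ≤ M) {q : Q} {a : ℝ}
    (ha : a ∈ cappedWordWeights π p T M q) : 0 ≤ a := by
  rcases ha with rfl | ⟨l, -, rfl⟩
  exacts [hM, List.sum_nonneg (by simp)]

theorem bddBelow_cappedWordWeights (q : Q) : BddBelow (cappedWordWeights π p T M q) :=
  BddBelow.insert M ⟨0, by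
    rintro _ ⟨l, -, rfl⟩
    exact List.sum_nonneg (by simp)⟩

theorem cappedWordLength_nonneg (hM : 0 ≤ M) (q : Q) : 0 ≤ cappedWordLength π p T M q :=
  le_csInf (Set.insert_nonempty _ _) fun _ => nonneg_of_mem_cappedWordWeights hM

theorem cappedWordLength_le_cap (q : Q) : cappedWordLength π p T M q ≤ M :=
  csInf_le (bddBelow_cappedWordWeights q) (Set.mem_insert _ _)

theorem cappedWordLength_le_sum {q : Q} {l : List G} (hl : l ∈ liftingWords π T q) :
    cappedWordLength π p T M q ≤ (l.map p).sum :=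
  csInf_le (bddBelow_cappedWordWeights q) (Set.mem_insert_of_mem _ ⟨l, hl, rfl⟩)

theorem le_cappedWordLength {q : Q} {a : ℝ} (haM : a ≤ M)
    (h : ∀ l ∈ liftingWords π T q, a ≤ (l.map p).sum) : a ≤ cappedWordLength π p T M q := by
  refine le_csInf (Set.insert_nonempty _ _) ?_
  rintro _ (rfl | ⟨l, hl, rfl⟩)
  exacts [haM, h l hl]

theorem cappedWordLength_one (hM : 0 ≤ M) : cappedWordLength π p T M 1 = 0 := by
  refine le_antisymm ?_ (cappedWordLength_nonneg hM 1)
  simpa using cappedWordLength_le_sum (l := []) ⟨by simp, by simp⟩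

theorem cappedWordLength_inv_le (hT : ∀ t ∈ T, t⁻¹ ∈ T) (q : Q) :
    cappedWordLength π p T M q⁻¹ ≤ cappedWordLength π p T M q := by
  refine le_cappedWordLength (cappedWordLength_le_cap _) fun l ⟨hlT, hlq⟩ => ?_
  refine (cappedWordLength_le_sum (l := (l.map (·⁻¹)).reverse) ⟨?_, ?_⟩).trans_eq ?_
  · simpa using fun t ht => by simpa using hT _ (hlT _ ht)
  · simp [← List.prod_inv_reverse, ← hlq]
  · simp [List.sum_reverse, Function.comp_def]

theorem cappedWordLength_mul_le_add (hM : 0 ≤ M) {q₁ q₂ : Q} {a b : ℝ}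
    (ha : a ∈ cappedWordWeights π p T M q₁) (hb : b ∈ cappedWordWeights π p T M q₂) :
    cappedWordLength π p T M (q₁ * q₂) ≤ a + b := by
  have hle_cap := cappedWordLength_le_cap (π := π) (p := p) (T := T) (M := M) (q₁ * q₂)
  rcases ha with rfl | ⟨l₁, ⟨hl₁T, hl₁q⟩, rfl⟩
  · linarith [nonneg_of_mem_cappedWordWeights hM hb]
  rcases hb with rfl | ⟨l₂, ⟨hl₂T, hl₂q⟩, rfl⟩
  · linarith [List.sum_nonneg (l := l₁.map p) (by simp)]
  refine (cappedWordLength_le_sum (l := l₁ ++ l₂) ⟨?_, ?_⟩).trans_eq ?_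
  · simpa using fun t ht => ht.elim (hl₁T t) (hl₂T t)
  · simp [hl₁q, hl₂q]
  · simp

theorem cappedWordLength_mul_le (hM : 0 ≤ M) (q₁ q₂ : Q) :
    cappedWordLength π p T M (q₁ * q₂) ≤
      cappedWordLength π p T M q₁ + cappedWordLength π p T M q₂ := calc
  _ ≤ sInf (cappedWordWeights π p T M q₁ + cappedWordWeights π p T M q₂) :=
    le_csInf ((Set.insert_nonempty _ _).add (Set.insert_nonempty _ _)) <| by
      rintro _ ⟨a, ha, b, hb, rfl⟩
      exact cappedWordLength_mul_le_add hM ha hb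
  _ = _ := csInf_add (Set.insert_nonempty _ _) (bddBelow_cappedWordWeights q₁)
    (Set.insert_nonempty _ _) (bddBelow_cappedWordWeights q₂)

variable (π p T M) in
noncomputable def cappedWordSeminorm (hT : ∀ t ∈ T, t⁻¹ ∈ T) (hM : 0 ≤ M) :
    GroupSeminorm Q where
  toFun := cappedWordLength π p T M
  map_one' := cappedWordLength_one hM
  mul_le' := cappedWordLength_mul_le hM
  inv' q := le_antisymm (cappedWordLength_inv_le hT q)
    (by simpa using cappedWordLength_inv_le hT q⁻¹)

theorem cappedWordLength_map_eq {g : G} (hg : g ∈ T) (hgM : p g ≤ M)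
    (hinj : ∀ l ∈ liftingWords π T (π g), (l.map p).sum ≤ M → l.prod = g) :
    cappedWordLength π p T M (π g) = p g := by
  refine le_antisymm ((cappedWordLength_le_sum (l := [g]) ⟨by simpa using hg, by simp⟩).trans_eq
    (by simp)) (le_cappedWordLength hgM fun l hl => ?_)
  rcases le_or_gt (l.map p).sum M with hlM | hlM
  · exact hinj l hl hlM ▸ p.map_list_prod_le l
  · exact hgM.trans hlM.le

end CappedWordLength

theorem exists_finiteIndex_invariant_pseudometric {G : Type*} [Group G]
    (hG : IsResiduallyFinite G) (d : G → G → ℝ) (hd : IsLeftInvPseudometric d)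
    (K : Finset G) (hK : ∀ x ∈ K, ∀ y ∈ K, x ≠ y → 0 < d x y) :
    ∃ H : Subgroup G, H.FiniteIndex ∧
      ∃ lam : (G ⧸ H) → (G ⧸ H) → ℝ,
        (∀ x y, 0 ≤ lam x y) ∧ (∀ x, lam x x = 0) ∧ (∀ x y, lam x y = lam y x) ∧
        (∀ x y z, lam x z ≤ lam x y + lam y z) ∧
        (∀ (g : G) (x y : G ⧸ H), lam (g • x) (g • y) = lam x y) ∧
        (∀ x ∈ K, ∀ y ∈ K, lam (x : G ⧸ H) (y : G ⧸ H) = d x y) := by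
  classical
  set p := hd.toGroupSeminorm
  set T := K.offDiag.image fun x => x.1⁻¹ * x.2
  have hT : ∀ t ∈ T, t⁻¹ ∈ T := fun _ => Finset.inv_mem_image_offDiag_inv_mul
  have hTpos : ∀ t ∈ T, 0 < p t := by
    simp only [T, Finset.mem_image, Finset.mem_offDiag]
    rintro _ ⟨⟨x, y⟩, ⟨hx, hy, hxy⟩, rfl⟩
    exact (hd.toGroupSeminorm_inv_mul x y).symm ▸ hK x hx y hy hxy
  set M := ∑ t ∈ T, p t
  have hM : 0 ≤ M := Finset.sum_nonneg fun t _ => apply_nonneg p t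
  obtain ⟨F, hF⟩ := exists_finset_forall_prod_mem_of_sum_le T p hTpos M
  obtain ⟨N, hN, hNfin, hinj⟩ := hG.exists_injOn_mk (F ∪ T)
  set L := cappedWordSeminorm (QuotientGroup.mk' N) p T M hT hM
  obtain ⟨hnonneg, hself, hsymm, htri, hsmul⟩ := L.quotient_inv_mul_isInvariantPseudometric
  refine ⟨N, hNfin, fun a b => L (a⁻¹ * b), hnonneg, hself, hsymm, htri, hsmul,
    fun x hx y hy => ?_⟩
  rcases eq_or_ne x y with rfl | hxy
  · simp [hd.2.1]
  have hxyT : x⁻¹ * y ∈ T :=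
    Finset.mem_image.mpr ⟨(x, y), Finset.mem_offDiag.mpr ⟨hx, hy, hxy⟩, rfl⟩
  show L ((x : G ⧸ N)⁻¹ * y) = d x y
  rw [← hd.toGroupSeminorm_inv_mul, ← QuotientGroup.mk_inv, ← QuotientGroup.mk_mul]
  exact cappedWordLength_map_eq hxyT (Finset.single_le_sum (fun t _ => apply_nonneg p t) hxyT)
    fun l hl hlM => hinj (Finset.mem_union_left _ (hF l hl.1 hlM))
      (Finset.mem_union_right _ hxyT) hl.2
end

section
/- Let X be a metric space that is finitely injective: for all finite metric spaces K ⊆ L, every isometric (distance-preserving) embedding K → X extends to an isometric embedding L → X. Let K be a finite set carrying two pseudometrics μ and λ, let R be the diameter of (K, λ), and fix a ∈ K. Then for every distance-preserving map i : (K, μ) → X there exists a distance-preserving map j : (K, μ + λ) → X with j(a) = i(a) and d(i(x), j(x)) ≤ λ(x, a) ≤ R for every x ∈ K. -/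
/-!
Glue two copies of `K`: the first carries `μ`, the second `μ + λ`, and the point `x` of the
first copy lies at distance `μ(x, y) + λ(y, a)` from the point `y` of the second. This is again
a pseudometric, in which the two copies of `a` are at distance `0` and the two copies of `x` at
distance `λ(x, a)`. Finite injectivity extends `i`, placed on the first copy, to the metric
quotient of the glued space, and `j` is the resulting map on the second copy.
-/

/-- A metric space `X` is finitely injective: for all finite metric spaces
`K ⊆ L`, every isometric embedding `K → X` extends to `L`. -/
def FinitelyInjective (X : Type*) [MetricSpace X] : Prop :=
  ∀ (L : Type) (_ : MetricSpace L) (_ : Finite L) (K : Set L) (f : K → X),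
    Isometry f → ∃ g : L → X, Isometry g ∧ ∀ k : K, g k = f k

/-- A pseudometric on a set, given as a plain function. -/
def IsPseudometric {K : Type*} (d : K → K → ℝ) : Prop :=
  (∀ x y, 0 ≤ d x y) ∧ (∀ x, d x x = 0) ∧ (∀ x y, d x y = d y x) ∧
    (∀ x y z, d x z ≤ d x y + d y z)

abbrev IsPseudometric.toPseudoMetricSpace {M : Type*} {d : M → M → ℝ} (hd : IsPseudometric d) :
    PseudoMetricSpace M where
  dist := d
  dist_self := hd.2.1
  dist_comm := hd.2.2.1
  dist_triangle := hd.2.2.2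

section Amalgam

variable {K : Type*} (μ lam : K → K → ℝ) (a : K)

def amalgamDist : K ⊕ K → K ⊕ K → ℝ
  | .inl x, .inl y => μ x y
  | .inl x, .inr y => μ x y + lam y a
  | .inr x, .inl y => μ x y + lam x a
  | .inr x, .inr y => μ x y + lam x y

variable {μ lam}

theorem isPseudometric_amalgamDist (hμ : IsPseudometric μ) (hlam : IsPseudometric lam) :
    IsPseudometric (amalgamDist μ lam a) := by
  obtain ⟨hμ0, hμs, hμc, hμt⟩ := hμ
  obtain ⟨hl0, hls, hlc, hlt⟩ := hlam
  refine ⟨?_, ?_, ?_, ?_⟩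
  · rintro (x | x) (y | y) <;> simp only [amalgamDist] <;>
      linarith [hμ0 x y, hl0 x y, hl0 x a, hl0 y a]
  · rintro (x | x) <;> simp [amalgamDist, hμs, hls]
  · rintro (x | x) (y | y) <;> simp [amalgamDist, hμc x y, hlc x y]
  · rintro (x | x) (y | y) (z | z) <;> simp only [amalgamDist] <;>
      linarith [hμt x y z, hl0 y a, hlt x y z, hlt x y a, hlt z y a, hlc y z, hlt x a z, hlc a z]

end Amalgam

namespace FinitelyInjective

variable {X : Type*} [MetricSpace X]

open SeparationQuotient in
theorem exists_isometry_extend (hX : FinitelyInjective X) {M : Type} [PseudoMetricSpace M]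
    [Finite M] (S : Set M) (f : M → X) (hf : ∀ x ∈ S, ∀ y ∈ S, dist (f x) (f y) = dist x y) :
    ∃ g : M → X, Isometry g ∧ ∀ x ∈ S, g x = f x := by
  have hmk_surj : ∀ q : (mk '' S : Set (SeparationQuotient M)), ∃ s ∈ S, mk s = q.1 := fun q => q.2
  choose rep hrepS hrep using hmk_surj
  have hf_rep : Isometry (f ∘ rep) := Isometry.of_dist_eq fun q r => by
    rw [Function.comp_apply, Function.comp_apply, hf _ (hrepS q) _ (hrepS r), ← dist_mk,
      hrep, hrep, Subtype.dist_eq]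
  obtain ⟨g, hg, hgf⟩ := hX _ inferInstance (Finite.of_surjective _ surjective_mk) _ _ hf_rep
  refine ⟨g ∘ mk, Isometry.of_dist_eq fun x y => by simp [hg.dist_eq, dist_mk], fun x hx => ?_⟩
  let q : (mk '' S : Set (SeparationQuotient M)) := ⟨mk x, x, hx, rfl⟩
  have hrep_x : dist (f (rep q)) (f x) = 0 := by
    rw [hf _ (hrepS q) _ hx, ← dist_mk, hrep, dist_self]
  exact (hgf q).trans (dist_eq_zero.mp hrep_x)

theorem exists_dist_eq_extend (hX : FinitelyInjective X) {M : Type} [Finite M]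
    {d : M → M → ℝ} (hd : IsPseudometric d) (S : Set M) (f : M → X)
    (hf : ∀ x ∈ S, ∀ y ∈ S, dist (f x) (f y) = d x y) :
    ∃ g : M → X, (∀ x y, dist (g x) (g y) = d x y) ∧ ∀ x ∈ S, g x = f x := by
  let := hd.toPseudoMetricSpace
  obtain ⟨g, hg, hgf⟩ := hX.exists_isometry_extend S f hf
  exact ⟨g, hg.dist_eq, hgf⟩

end FinitelyInjective

theorem approx_embedding_of_finitelyInjective {X : Type*} [MetricSpace X]
    (hX : FinitelyInjective X) (K : Type) [Finite K]
    (μ lam : K → K → ℝ) (hμ : IsPseudometric μ) (hlam : IsPseudometric lam)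
    (R : ℝ) (hR : R = ⨆ x : K, ⨆ y : K, lam x y) (a : K)
    (i : K → X) (hi : ∀ x y, dist (i x) (i y) = μ x y) :
    ∃ j : K → X, (∀ x y, dist (j x) (j y) = μ x y + lam x y) ∧ j a = i a ∧
      ∀ x, dist (i x) (j x) ≤ lam x a ∧ lam x a ≤ R := by
  obtain ⟨g, hg, hgi⟩ := hX.exists_dist_eq_extend (isPseudometric_amalgamDist a hμ hlam)
    (Set.range Sum.inl) (Sum.elim i i) (by rintro _ ⟨x, rfl⟩ _ ⟨y, rfl⟩; exact hi x y)
  have hg_inl (x : K) : g (.inl x) = i x := hgi _ ⟨x, rfl⟩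
  refine ⟨g ∘ Sum.inr, fun x y => hg _ _, ?_, fun x => ⟨?_, ?_⟩⟩
  · have hdist : dist (g (.inr a)) (g (.inl a)) = 0 := by
      rw [hg]; simp [amalgamDist, hμ.2.1, hlam.2.1]
    rw [Function.comp_apply, dist_eq_zero.mp hdist, hg_inl]
  · rw [← hg_inl, Function.comp_apply, hg]; simp [amalgamDist, hμ.2.1]
  · rw [hR]
    exact le_ciSup_of_le (Finite.bddAbove_range _) x (le_ciSup (Finite.bddAbove_range _) a)
end

section
/- For a topological group G, the following two properties are equivalent: (⊛₁) for all finite subsets A, B of G with every element of A commuting with every element of B, and every assignment of neighbourhoods to the points of A and B, there exist finite subsets A', B' (with corresponding points in the prescribed neighbourhoods) such that every element of A' commutes with every element of B' and the subgroup generated by A' ∪ B' is relatively compact; (⊛₃) with Γ = F∞ × F∞ (the direct product of two free groups of countably infinite rank), the homomorphisms Γ → G with relatively compact range are dense in the space Rep(Γ, G) = Hom(Γ, G) ⊆ G^Γ with the product topology. -/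
open scoped Pointwise

/-- Property ⊛₁ of a topological group: commuting finite subsets can be
approximated by commuting finite subsets generating a relatively compact
subgroup. -/
def KirchbergStar1 (G : Type*) [Group G] [TopologicalSpace G] : Prop :=
  ∀ (A B : Finset G), (∀ a ∈ A, ∀ b ∈ B, Commute a b) →
    ∀ U : G → Set G, (∀ x, U x ∈ nhds x) →
      ∃ a' b' : G → G,
        (∀ x ∈ A, a' x ∈ U x) ∧ (∀ x ∈ B, b' x ∈ U x) ∧
        (∀ x ∈ A, ∀ y ∈ B, Commute (a' x) (b' y)) ∧
        IsCompact (closure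
          (Subgroup.closure (a' '' (A : Set G) ∪ b' '' (B : Set G)) : Set G))

/-- Property ⊛₃ of a topological group: homomorphisms of `F∞ × F∞` with
relatively compact range are dense in `Rep(F∞ × F∞, G)` (pointwise
convergence topology). -/
def KirchbergStar3 (G : Type*) [Group G] [TopologicalSpace G] : Prop :=
  ∀ (f : FreeGroup ℕ × FreeGroup ℕ →* G)
    (S : Finset (FreeGroup ℕ × FreeGroup ℕ))
    (U : FreeGroup ℕ × FreeGroup ℕ → Set G),
    (∀ γ, U γ ∈ nhds (f γ)) →
      ∃ h : FreeGroup ℕ × FreeGroup ℕ →* G,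
        IsCompact (closure (Set.range h)) ∧ ∀ γ ∈ S, h γ ∈ U γ

/-!
Via the generators, a homomorphism `F∞ × F∞ → G` is a pair of sequences in `G` each term of
one commuting with each term of the other, and its range is the subgroup they generate.
Words depend continuously on the generators, so a basic neighbourhood in `Rep(F∞ × F∞, G)`
only constrains finitely many generator values: ⊛₁ applied to these values, with all other
generators sent to `1`, gives ⊛₃. Conversely, enumerating the finite commuting sets `A ∪ {1}`
and `B ∪ {1}` as generator values of a homomorphism and applying ⊛₃ to it gives ⊛₁.
-/

open Filter Set Topology

namespace FreeGroup

variable {α β G : Type*} [Group G]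

theorem commute_lift_lift {s : α → G} {t : β → G} (h : ∀ a b, Commute (s a) (t b))
    (x : FreeGroup α) (y : FreeGroup β) : Commute (lift s x) (lift t y) := by
  have hle : (lift s).range ≤ Subgroup.centralizer (lift t).range := by
    rw [range_lift_eq_closure, range_lift_eq_closure, Subgroup.centralizer_closure,
      Subgroup.closure_le]
    rintro _ ⟨a, rfl⟩ _ ⟨b, rfl⟩
    exact (h a b).symm.eq
  exact (hle ⟨x, rfl⟩ _ ⟨y, rfl⟩).symm

def liftProd (s : α → G) (t : β → G) (h : ∀ a b, Commute (s a) (t b)) :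
    FreeGroup α × FreeGroup β →* G :=
  (lift s).noncommCoprod (lift t) (commute_lift_lift h)

variable {s : α → G} {t : β → G} (h : ∀ a b, Commute (s a) (t b))

@[simp]
theorem liftProd_apply (γ : FreeGroup α × FreeGroup β) :
    liftProd s t h γ = lift s γ.1 * lift t γ.2 :=
  rfl

theorem range_liftProd : (liftProd s t h).range = Subgroup.closure (range s ∪ range t) := by
  rw [liftProd, MonoidHom.noncommCoprod_range, range_lift_eq_closure, range_lift_eq_closure,
    Subgroup.closure_union]

theorem lift_mul_lift_eq (f : FreeGroup α × FreeGroup β →* G)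
    (γ : FreeGroup α × FreeGroup β) :
    lift (fun a => f (of a, 1)) γ.1 * lift (fun b => f (1, of b)) γ.2 = f γ := by
  have hinl : lift (fun a => f (of a, 1)) = f.comp (MonoidHom.inl _ _) := by ext; simp
  have hinr : lift (fun b => f (1, of b)) = f.comp (MonoidHom.inr _ _) := by ext; simp
  rw [hinl, hinr]
  exact DFunLike.congr_fun (MonoidHom.noncommCoprod_unique f) γ

theorem continuous_lift_apply [TopologicalSpace G] [IsTopologicalGroup G] (w : FreeGroup α) :
    Continuous fun s : α → G => lift s w := by
  induction w using FreeGroup.induction_on with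
  | C1 => simpa using continuous_const
  | of a => simpa using continuous_apply a
  | inv_of a ih => exact ih.inv.congr fun _ => (_root_.map_inv _ _).symm
  | mul x y hx hy => exact (hx.mul hy).congr fun _ => (_root_.map_mul _ _ _).symm

end FreeGroup

section NhdsPi

variable {ι κ X : Type*} [TopologicalSpace X]

-- `V` is indexed by the values of `s`, not by `ι`, as neighbourhood assignments in ⊛₁ are.
theorem exists_finset_forall_mem_of_mem_nhds_pi {s : ι → X} {T : Set (ι → X)}
    (hT : T ∈ 𝓝 s) :
    ∃ (I : Finset ι) (V : X → Set X), (∀ x, V x ∈ 𝓝 x) ∧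
      ∀ u : ι → X, (∀ i ∈ I, u i ∈ V (s i)) → u ∈ T := by
  rw [nhds_pi, mem_pi'] at hT
  obtain ⟨I, W, hW, hWT⟩ := hT
  refine ⟨I, fun x => {y | ∀ i ∈ I, s i = x → y ∈ W i}, fun x => ?_, fun u hu => ?_⟩
  · refine (eventually_all_finset I).2 fun i _ => eventually_imp_distrib_left.2 ?_
    rintro rfl
    exact hW i
  · exact hWT fun i hi => hu i hi i hi rfl

theorem exists_finset_forall_mem_of_mem_nhds_prod_pi {s : ι → X} {t : κ → X}
    {T : Set ((ι → X) × (κ → X))} (hT : T ∈ 𝓝 (s, t)) :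
    ∃ (I : Finset ι) (J : Finset κ) (V : X → Set X), (∀ x, V x ∈ 𝓝 x) ∧
      ∀ u v, (∀ i ∈ I, u i ∈ V (s i)) → (∀ j ∈ J, v j ∈ V (t j)) →
        (u, v) ∈ T := by
  rw [nhds_prod_eq, mem_prod_iff] at hT
  obtain ⟨T₁, hT₁, T₂, hT₂, hT⟩ := hT
  obtain ⟨I, V₁, hV₁, hI⟩ := exists_finset_forall_mem_of_mem_nhds_pi hT₁
  obtain ⟨J, V₂, hV₂, hJ⟩ := exists_finset_forall_mem_of_mem_nhds_pi hT₂
  refine ⟨I, J, fun x => V₁ x ∩ V₂ x, fun x => inter_mem (hV₁ x) (hV₂ x),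
    fun u v hu hv => hT ⟨?_, ?_⟩⟩
  · exact hI u fun i hi => (hu i hi).1
  · exact hJ v fun j hj => (hv j hj).2

end NhdsPi

theorem Set.Finite.exists_insert_one_eq_range {M : Type*} [One M] {A : Set M} (hA : A.Finite) :
    ∃ s : ℕ → M, insert 1 A = range s :=
  (hA.insert 1).countable.exists_eq_range (insert_nonempty _ _)

section Kirchberg

open FreeGroup

variable {G : Type*} [Group G] [TopologicalSpace G]

theorem kirchbergStar3_of_kirchbergStar1 [IsTopologicalGroup G] (h₁ : KirchbergStar1 G) :
    KirchbergStar3 G := by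
  classical
  intro f S U hU
  set s : ℕ → G := fun m => f (of m, 1)
  set t : ℕ → G := fun n => f (1, of n)
  have hnear : ∀ᶠ p in 𝓝 (s, t), ∀ γ ∈ S, lift p.1 γ.1 * lift p.2 γ.2 ∈ U γ := by
    refine (eventually_all_finset S).2 fun γ _ => ContinuousAt.eventually_mem ?_ ?_
    · exact (((continuous_lift_apply γ.1).comp continuous_fst).mul
        ((continuous_lift_apply γ.2).comp continuous_snd)).continuousAt
    · exact (lift_mul_lift_eq f γ).symm ▸ hU γ
  obtain ⟨I, J, V, hV, hIJ⟩ := exists_finset_forall_mem_of_mem_nhds_prod_pi hnear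
  have hst : ∀ a ∈ I.image s, ∀ b ∈ J.image t, Commute a b := by
    simp only [Finset.mem_image]
    rintro _ ⟨m, -, rfl⟩ _ ⟨n, -, rfl⟩
    exact (MonoidHom.commute_inl_inr _ _).map f
  obtain ⟨a', b', ha', hb', hab, hK⟩ := h₁ _ _ hst V hV
  set u : ℕ → G := (I : Set ℕ).mulIndicator (a' ∘ s)
  set v : ℕ → G := (J : Set ℕ).mulIndicator (b' ∘ t)
  have hu : ∀ m, u m = 1 ∨ u m ∈ a' '' ↑(I.image s) := fun m => by
    rw [Finset.coe_image, ← image_comp]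
    exact (mem_range_mulIndicator.1 ⟨m, rfl⟩).imp And.left id
  have hv : ∀ n, v n = 1 ∨ v n ∈ b' '' ↑(J.image t) := fun n => by
    rw [Finset.coe_image, ← image_comp]
    exact (mem_range_mulIndicator.1 ⟨n, rfl⟩).imp And.left id
  have huv : ∀ m n, Commute (u m) (v n) := by
    intro m n
    rcases hu m with hm | ⟨x, hx, hxm⟩
    · exact hm ▸ .one_left _
    rcases hv n with hn | ⟨y, hy, hyn⟩
    · exact hn ▸ .one_right _
    · exact hxm ▸ hyn ▸ hab x hx y hy
  refine ⟨liftProd u v huv, hK.of_isClosed_subset isClosed_closure (closure_mono ?_),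
    fun γ hγ => hIJ u v (fun m hm => ?_) (fun n hn => ?_) γ hγ⟩
  · rw [← MonoidHom.coe_range, range_liftProd, SetLike.coe_subset_coe, Subgroup.closure_le]
    rintro _ (⟨n, rfl⟩ | ⟨n, rfl⟩)
    · exact (hu n).elim (· ▸ one_mem _) fun h => Subgroup.subset_closure (.inl h)
    · exact (hv n).elim (· ▸ one_mem _) fun h => Subgroup.subset_closure (.inr h)
  · rw [show u m = a' (s m) from eqOn_mulIndicator (Finset.mem_coe.2 hm)]
    exact ha' _ (Finset.mem_image_of_mem s hm)
  · rw [show v n = b' (t n) from eqOn_mulIndicator (Finset.mem_coe.2 hn)]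
    exact hb' _ (Finset.mem_image_of_mem t hn)

theorem kirchbergStar1_of_kirchbergStar3 (h₃ : KirchbergStar3 G) : KirchbergStar1 G := by
  intro A B hAB U hU
  obtain ⟨s, hs⟩ := A.finite_toSet.exists_insert_one_eq_range
  obtain ⟨t, ht⟩ := B.finite_toSet.exists_insert_one_eq_range
  have hst : ∀ m n, Commute (s m) (t n) := by
    intro m n
    rcases (hs ▸ mem_range_self m : s m ∈ insert 1 (A : Set G)) with hm | hm
    · exact hm ▸ .one_left _
    rcases (ht ▸ mem_range_self n : t n ∈ insert 1 (B : Set G)) with hn | hn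
    · exact hn ▸ .one_right _
    · exact hAB _ hm _ hn
  set i := Function.invFun s
  set j := Function.invFun t
  have hi : ∀ x ∈ A, s (i x) = x := fun x hx =>
    Function.invFun_eq (hs ▸ mem_insert_of_mem _ hx : x ∈ range s)
  have hj : ∀ y ∈ B, t (j y) = y := fun y hy =>
    Function.invFun_eq (ht ▸ mem_insert_of_mem _ hy : y ∈ range t)
  set f := liftProd s t hst
  obtain ⟨h, hK, hhU⟩ := h₃ f
    (A.image (fun x => (of (i x), 1)) ∪ B.image (fun y => (1, of (j y)))) (U ∘ f) fun _ => hU _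
  refine ⟨fun x => h (of (i x), 1), fun y => h (1, of (j y)), fun x hx => ?_, fun y hy => ?_,
    fun x _ y _ => (MonoidHom.commute_inl_inr _ _).map h,
    hK.of_isClosed_subset isClosed_closure (closure_mono ?_)⟩
  · simpa [f, hi x hx] using hhU _ (Finset.mem_union_left _ (Finset.mem_image_of_mem _ hx))
  · simpa [f, hj y hy] using
      hhU _ (Finset.mem_union_right _ (Finset.mem_image_of_mem _ hy))
  · rw [← MonoidHom.coe_range, SetLike.coe_subset_coe, Subgroup.closure_le]
    rintro _ (⟨x, -, rfl⟩ | ⟨y, -, rfl⟩) <;> exact ⟨_, rfl⟩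

end Kirchberg

theorem kirchbergStar1_iff_star3 (G : Type*) [Group G] [TopologicalSpace G]
    [IsTopologicalGroup G] : KirchbergStar1 G ↔ KirchbergStar3 G :=
  ⟨kirchbergStar3_of_kirchbergStar1, kirchbergStar1_of_kirchbergStar3⟩
end

section
/- The free product of two residually finite groups is residually finite. In particular, if Γ is residually finite and F is a free group, then the free product Γ * F is residually finite. -/
theorem isResiduallyFinite_iff_residuallyFinite {G : Type*} [Group G] :
    IsResiduallyFinite G ↔ Group.ResiduallyFinite G := by
  rw [Group.residuallyFinite_iff_exists_finiteIndexNormalSubgroup]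
  refine forall₂_congr fun g _ => ⟨fun ⟨N, hN, hfi, hg⟩ => ⟨⟨N, hN, hfi⟩, hg⟩,
    fun ⟨N, hg⟩ => ⟨N, N.isNormal', N.isFiniteIndex', hg⟩⟩

namespace Group

theorem residuallyFinite_of_forall_exists_monoidHom {G : Type*} [Group G]
    (h : ∀ g : G, g ≠ 1 →
      ∃ (K : Type*) (_ : Group K) (_ : ResiduallyFinite K) (f : G →* K), f g ≠ 1) :
    ResiduallyFinite G := by
  refine residuallyFinite_iff_exists_finiteIndexNormalSubgroup.2 fun g hg => ?_
  obtain ⟨K, _, _, f, hf⟩ := h g hg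
  obtain ⟨N, hN⟩ := exists_finiteIndexNormalSubgroup_notMem (f g) hf
  exact ⟨N.comap f, hN⟩

theorem ResiduallyFinite.of_injective {G G' : Type*} [Group G] [Group G'] [ResiduallyFinite G']
    (f : G →* G') (hf : Function.Injective f) : ResiduallyFinite G :=
  residuallyFinite_of_forall_exists_monoidHom fun _ hg =>
    ⟨G', _, ‹_›, f, (map_ne_one_iff f hf).2 hg⟩

theorem exists_finiteIndexNormalSubgroup_forall_notMem {G : Type*} [Group G] [ResiduallyFinite G]
    {s : Set G} (hs : s.Finite) (h1 : 1 ∉ s) :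
    ∃ N : FiniteIndexNormalSubgroup G, ∀ g ∈ s, g ∉ N := by
  induction s, hs using Set.Finite.induction_on with
  | empty => exact ⟨.ofSubgroup ⊤, by simp⟩
  | @insert a s _ _ ih =>
    obtain ⟨N, hN⟩ := ih fun h => h1 (Set.mem_insert_of_mem a h)
    obtain ⟨K, hK⟩ :=
      exists_finiteIndexNormalSubgroup_notMem a fun h => h1 (h ▸ Set.mem_insert a s)
    refine ⟨N ⊓ K, ?_⟩
    rintro g (rfl | hg) ⟨hgN, hgK⟩
    exacts [hK hgK, hN g hg hgN]

end Group

namespace MulAction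

variable (G : Type*) {X : Type*} [Group G] [MulAction G X]

open scoped Classical in
/-- Since orbits are `G`-invariant, moving only the points whose whole orbit lies in `S` is still
an action of `G` on `S`. -/
noncomputable def truncatedSMul (S : Set X) (g : G) (x : S) : S :=
  if h : orbit G (x : X) ⊆ S then ⟨g • (x : X), h (mem_orbit _ g)⟩ else x

noncomputable abbrev truncated (S : Set X) : MulAction G S where
  smul := truncatedSMul G S
  one_smul x := by
    change truncatedSMul G S 1 x = x
    unfold truncatedSMul
    split_ifs <;> simp
  mul_smul g g' x := by
    change truncatedSMul G S (g * g') x = truncatedSMul G S g (truncatedSMul G S g' x)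
    by_cases h : orbit G (x : X) ⊆ S
    · simp [truncatedSMul, h, mul_smul]
    · simp [truncatedSMul, h]

noncomputable def truncatedPerm (S : Set X) : G →* Equiv.Perm S :=
  letI := truncated G S
  toPermHom G S

variable {G}

theorem truncatedPerm_apply_of_orbit_subset {S : Set X} (g : G) {x : S}
    (h : orbit G (x : X) ⊆ S) : truncatedPerm G S g x = ⟨g • (x : X), h (mem_orbit _ g)⟩ :=
  open scoped Classical in dif_pos h

end MulAction

namespace Monoid.CoprodI.Word

variable {ι : Type*} {M : ι → Type*} [∀ i, Monoid (M i)]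

def map {N : ι → Type*} [∀ i, Monoid (N i)] (f : ∀ i, M i →* N i) (w : Word M)
    (hw : ∀ p ∈ w.toList, f p.1 p.2 ≠ 1) : Word N where
  toList := w.toList.map (Sigma.map id fun i => f i)
  ne_one := by
    simp only [List.mem_map]
    rintro _ ⟨p, hp, rfl⟩
    exact hw p hp
  chain_ne := (List.isChain_map _).2 w.chain_ne

theorem prod_map {N : ι → Type*} [∀ i, Monoid (N i)] (f : ∀ i, M i →* N i) (w : Word M)
    (hw : ∀ p ∈ w.toList, f p.1 p.2 ≠ 1) :
    (w.map f hw).prod = lift (fun i => of.comp (f i)) w.prod := by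
  simp only [map, prod, List.map_map, map_list_prod]
  rfl

def boundedWords (s : Set ι) (n : ℕ) : Set (Word M) :=
  {w | w.toList.length ≤ n ∧ ∀ p ∈ w.toList, p.1 ∈ s}

theorem empty_mem_boundedWords (s : Set ι) (n : ℕ) : (empty : Word M) ∈ boundedWords s n := by
  simp [boundedWords]

theorem finite_boundedWords [∀ i, Finite (M i)] {s : Set ι} (hs : s.Finite) (n : ℕ) :
    (boundedWords s n : Set (Word M)).Finite := by
  have := hs.to_subtype
  have : Finite {p : Σ i, M i // p.1 ∈ s} :=
    .of_equiv (Σ i : s, M i) (Equiv.subtypeSigmaEquiv M (· ∈ s)).symm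
  refine (((List.finite_length_le {p : Σ i, M i // p.1 ∈ s} n).image
    (List.map Subtype.val)).preimage fun _ _ _ _ h => Word.ext h).subset ?_
  rintro w ⟨hlen, hw⟩
  exact ⟨w.toList.attach.map fun p => ⟨p.1, hw p.1 p.2⟩, by simpa using hlen, by simp⟩

variable [DecidableEq ι] [∀ i, DecidableEq (M i)]

theorem toList_smul_of_fstIdx_ne {i : ι} (m : M i) {w : Word M} (h : w.fstIdx ≠ some i) :
    (m • w).toList = w.toList ∨ (m • w).toList = ⟨i, m⟩ :: w.toList := by
  rw [smul_def, equivPair_eq_of_fstIdx_ne h]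
  unfold rcons
  split_ifs <;> simp_all

theorem prod_eq_one_iff {w : Word M} : w.prod = 1 ↔ w = empty :=
  ⟨fun h => Word.equiv.symm.injective h, fun h => h ▸ prod_empty⟩

section Group

variable {A : ι → Type*} [∀ i, Group (A i)] [∀ i, DecidableEq (A i)]

theorem orbit_subset_boundedWords {s : Set ι} {n : ℕ} {i : ι} {m : A i} {w : Word A} {h1 h2}
    (h : cons m w h1 h2 ∈ boundedWords s n) : MulAction.orbit (A i) w ⊆ boundedWords s n := by
  rintro _ ⟨m', rfl⟩
  obtain ⟨hlen, hs⟩ := h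
  simp only [cons_toList, List.length_cons, List.mem_cons, forall_eq_or_imp] at hlen hs
  rcases toList_smul_of_fstIdx_ne m' h1 with he | he <;> rw [boundedWords, Set.mem_ofPred_eq, he]
  · exact ⟨by omega, hs.2⟩
  · simpa [hlen] using hs

theorem lift_truncatedPerm_prod {s : Set ι} {n : ℕ} (w : Word A) (hw : w ∈ boundedWords s n) :
    lift (fun i => MulAction.truncatedPerm (A i) (boundedWords s n)) w.prod
      ⟨empty, empty_mem_boundedWords s n⟩ = ⟨w, hw⟩ := by
  induction w using consRecOn with
  | empty => rfl
  | cons i m w h1 h2 ih =>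
    have horb := orbit_subset_boundedWords hw
    rw [prod_cons, map_mul, Equiv.Perm.mul_apply, ih (horb (MulAction.mem_orbit_self w)), lift_of,
      MulAction.truncatedPerm_apply_of_orbit_subset _ horb]
    exact Subtype.ext (cons_eq_smul (h1 := h1) (h2 := h2)).symm

end Group

end Monoid.CoprodI.Word

namespace Monoid.CoprodI

open Word

variable {ι : Type*}

theorem residuallyFinite_of_finite {A : ι → Type*} [∀ i, Group (A i)] [∀ i, Finite (A i)] :
    Group.ResiduallyFinite (CoprodI A) := by
  classical
  refine Group.residuallyFinite_of_forall_exists_finite_monoidHom fun x hx => ?_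
  set w := Word.equiv x
  let B : Set (Word A) := boundedWords {i | i ∈ w.toList.map Sigma.fst} w.toList.length
  have hw : w ∈ B := ⟨le_rfl, fun p hp => List.mem_map_of_mem hp⟩
  have := (finite_boundedWords (List.finite_toSet _) _ : B.Finite).to_subtype
  refine ⟨Equiv.Perm B, inferInstance, inferInstance,
    lift fun i => MulAction.truncatedPerm (A i) B, fun h => hx ?_⟩
  have hprod : w.prod = x := Word.equiv.symm_apply_apply x
  have hperm := lift_truncatedPerm_prod w hw
  rw [hprod, h] at hperm
  rw [← hprod, prod_eq_one_iff]
  exact congrArg Subtype.val hperm.symm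

instance residuallyFinite {G : ι → Type*} [∀ i, Group (G i)]
    [∀ i, Group.ResiduallyFinite (G i)] :
    Group.ResiduallyFinite (CoprodI G) := by
  classical
  refine Group.residuallyFinite_of_forall_exists_monoidHom fun x hx => ?_
  set w := Word.equiv x
  have hN (i : ι) :
      ∃ N : FiniteIndexNormalSubgroup (G i), ∀ g, Sigma.mk i g ∈ w.toList → g ∉ N :=
    Group.exists_finiteIndexNormalSubgroup_forall_notMem (s := {g | Sigma.mk i g ∈ w.toList})
      ((List.finite_toSet w.toList).preimage sigma_mk_injective.injOn) (fun h => w.ne_one _ h rfl)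
  choose N hN using hN
  let q (i : ι) := QuotientGroup.mk' (N i : Subgroup (G i))
  have hq : ∀ p ∈ w.toList, q p.1 p.2 ≠ 1 := fun p hp => by
    simpa [q, QuotientGroup.eq_one_iff, FiniteIndexNormalSubgroup.mem_toSubgroup_iff]
      using hN p.1 p.2 hp
  refine ⟨CoprodI fun i => G i ⧸ (N i : Subgroup (G i)), inferInstance,
    residuallyFinite_of_finite, lift fun i => of.comp (q i), ?_⟩
  have hprod : w.prod = x := Word.equiv.symm_apply_apply x
  rw [← hprod, ← prod_map q w hq, Ne, prod_eq_one_iff]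
  intro h
  apply hx
  rw [← hprod, prod_eq_one_iff]
  simpa [Word.ext_iff, map] using h

end Monoid.CoprodI

namespace Monoid.Coprod

universe u

variable {G H : Type u} [Group G] [Group H]

instance instGroupCond : ∀ b : Bool, Group (cond b G H)
  | true => ‹Group G›
  | false => ‹Group H›

def toCoprodI : G ∗ H →* CoprodI fun b : Bool => cond b G H :=
  lift (CoprodI.of (M := fun b : Bool => cond b G H) (i := true))
    (CoprodI.of (M := fun b : Bool => cond b G H) (i := false))

def ofCoprodI : (CoprodI fun b : Bool => cond b G H) →* G ∗ H :=
  CoprodI.lift fun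
    | true => inl
    | false => inr

theorem ofCoprodI_comp_toCoprodI :
    (ofCoprodI (G := G) (H := H)).comp toCoprodI = MonoidHom.id _ := by
  ext <;> simp [toCoprodI, ofCoprodI]

instance residuallyFinite [Group.ResiduallyFinite G] [Group.ResiduallyFinite H] :
    Group.ResiduallyFinite (G ∗ H) :=
  have (b : Bool) : Group.ResiduallyFinite (cond b G H) := by cases b <;> assumption
  .of_injective toCoprodI (Function.LeftInverse.injective (g := ofCoprodI)
    (DFunLike.congr_fun ofCoprodI_comp_toCoprodI))

end Monoid.Coprod

namespace FreeGroup

instance residuallyFinite_unit : Group.ResiduallyFinite (FreeGroup Unit) := by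
  refine Group.residuallyFinite_of_forall_exists_finite_monoidHom fun x hx => ?_
  set k := freeGroupUnitEquivInt x
  have hk : of () ^ k = x := freeGroupUnitEquivInt.symm_apply_apply x
  have hk0 : k ≠ 0 := fun hk0 => hx (by rw [← hk, hk0, zpow_zero])
  refine ⟨Multiplicative (ZMod (k.natAbs + 1)), inferInstance, inferInstance,
    lift fun _ => Multiplicative.ofAdd 1, fun h => ?_⟩
  rw [← hk, map_zpow, lift_apply_of, ← ofAdd_zsmul, zsmul_one] at h
  have := (ZMod.intCast_zmod_eq_zero_iff_dvd _ _).1 (ofAdd_eq_one.1 h)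
  exact hk0 (Int.eq_zero_of_dvd_of_natAbs_lt_natAbs this (by omega))

instance residuallyFinite (ι : Type*) : Group.ResiduallyFinite (FreeGroup ι) :=
  .of_injective freeGroupEquivCoprodI.toMonoidHom freeGroupEquivCoprodI.injective

end FreeGroup

theorem freeProduct_residuallyFinite :
    (∀ (G H : Type) (_ : Group G) (_ : Group H),
      IsResiduallyFinite G → IsResiduallyFinite H →
        IsResiduallyFinite (Monoid.Coprod G H)) ∧
    (∀ (Γ : Type) (_ : Group Γ) (ι : Type), IsResiduallyFinite Γ →
        IsResiduallyFinite (Monoid.Coprod Γ (FreeGroup ι))) := by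
  simp only [isResiduallyFinite_iff_residuallyFinite]
  exact ⟨fun _ _ _ _ _ _ => inferInstance, fun _ _ _ _ => inferInstance⟩
end
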